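/- Let U = E_{n1} + E_{(n−1)2} and ξ = E_{1n} + E_{2(n−1)} in sl(n, ℝ) with n ≥ 4. Then the commutator [U, ξ] = −E_{11} − E_{22} + E_{(n−1)(n−1)} + E_{nn}, and for a ≠ 0 the matrix ξ + a[U, ξ] does not have the same characteristic polynomial as ξ. -/

import Mathlib

/-!
`ξ² = 0`, so `ξ` is nilpotent, and a matrix `M` with the same characteristic polynomial is
nilpotent too (Cayley–Hamilton), whence `tr (M²) = 0`. For `M = ξ + a [U, ξ]` the cross terms
vanish, since `tr (ξ [U, ξ]) = tr (ξ U ξ) - tr (ξ² U) = 0` by cyclicity of the trace, leaving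
`tr (M²) = a² tr ([U, ξ]²) = 4 a²`.
-/

open Matrix

section Nilpotent

variable {n R : Type*} [Fintype n] [DecidableEq n] [CommRing R] [IsReduced R]

open Polynomial in
theorem Matrix.charpoly_eq_X_pow_of_isNilpotent {B : Matrix n n R} (hB : IsNilpotent B) :
    B.charpoly = X ^ Fintype.card n := by
  refine sub_eq_zero.mp <| Polynomial.ext fun i ↦ ?_
  have hcoeff := Polynomial.isNilpotent_iff.mp (isNilpotent_charpoly_sub_pow_of_isNilpotent hB) i
  simpa using hcoeff.eq_zero

theorem Matrix.isNilpotent_of_charpoly_eq {A B : Matrix n n R} (hB : IsNilpotent B)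
    (h : A.charpoly = B.charpoly) : IsNilpotent A :=
  ⟨Fintype.card n, by
    simpa [h, charpoly_eq_X_pow_of_isNilpotent hB] using A.aeval_self_charpoly⟩

theorem Matrix.trace_mul_self_eq_zero_of_isNilpotent {A : Matrix n n R} (hA : IsNilpotent A) :
    trace (A * A) = 0 :=
  (isNilpotent_trace_of_isNilpotent ((Commute.refl A).isNilpotent_mul_left hA)).eq_zero

end Nilpotent

section Commutator

variable {n R : Type*} [Fintype n] [CommRing R]

theorem Matrix.trace_mul_commutator_self (U ξ : Matrix n n R) :
    trace (ξ * (U * ξ - ξ * U)) = 0 := by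
  rw [mul_sub, trace_sub, ← Matrix.mul_assoc, trace_mul_comm (ξ * U), sub_self]

theorem Matrix.trace_mul_self_add_smul_commutator {U ξ : Matrix n n R} (hξ : ξ * ξ = 0)
    (a : R) :
    trace ((ξ + a • (U * ξ - ξ * U)) * (ξ + a • (U * ξ - ξ * U)))
      = a ^ 2 * trace ((U * ξ - ξ * U) * (U * ξ - ξ * U)) := by
  have hcross := trace_mul_commutator_self U ξ
  rw [trace_mul_comm] at hcross
  simp only [add_mul, mul_add, hξ, Matrix.smul_mul, Matrix.mul_smul, trace_add, trace_smul,
    trace_zero, hcross, trace_mul_commutator_self, smul_eq_mul]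
  ring

end Commutator

section FourIndices

variable {n R : Type*} [Fintype n] [DecidableEq n] [CommRing R] {p q r s : n}

theorem Matrix.single_add_single_mul_self_eq_zero (hsp : s ≠ p) (hsq : s ≠ q) (hrp : r ≠ p)
    (hrq : r ≠ q) (c d : R) :
    (single p s c + single q r d) * (single p s c + single q r d) = 0 := by
  simp [add_mul, mul_add, single_mul_single_of_ne, hsp, hsq, hrp, hrq]

theorem Matrix.commutator_single_add_single (hpq : p ≠ q) (hrs : r ≠ s) :
    (single s p (1 : R) + single r q 1) * (single p s 1 + single q r 1)
      - (single p s 1 + single q r 1) * (single s p 1 + single r q 1)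
      = -single p p 1 - single q q 1 + single r r 1 + single s s 1 := by
  simp only [add_mul, mul_add, single_mul_single_same, single_mul_single_of_ne, hpq, hpq.symm,
    hrs, hrs.symm, ne_eq, not_false_eq_true, mul_one, add_zero, zero_add]
  abel

theorem Matrix.trace_mul_self_signed_diagonal (hpq : p ≠ q) (hpr : p ≠ r) (hps : p ≠ s)
    (hqr : q ≠ r) (hqs : q ≠ s) (hrs : r ≠ s) :
    trace ((-single p p 1 - single q q 1 + single r r 1 + single s s 1)
      * (-single p p 1 - single q q 1 + single r r 1 + single s s (1 : R))) = 4 := by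
  simp only [add_mul, mul_add, sub_mul, mul_sub, neg_mul, mul_neg, single_mul_single_same,
    single_mul_single_of_ne, hpq, hpq.symm, hpr, hpr.symm, hps, hps.symm, hqr, hqr.symm, hqs,
    hqs.symm, hrs, hrs.symm, ne_eq, not_false_eq_true, mul_one, trace_add, trace_sub, trace_neg,
    trace_zero, trace_single_eq_same]
  norm_num

end FourIndices

/-- For `n ≥ 4`, with `U = Eₙ₁ + E₍ₙ₋₁₎₂` and `ξ = E₁ₙ + E₂₍ₙ₋₁₎`, the commutator is
`[U, ξ] = −E₁₁ − E₂₂ + E₍ₙ₋₁₎₍ₙ₋₁₎ + Eₙₙ`, and for `a ≠ 0` the matrix `ξ + a[U, ξ]` does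
not have the same characteristic polynomial as `ξ`. -/
theorem stmt_13 (n : ℕ) (hn : 4 ≤ n) (a : ℝ)
    (U ξ : Matrix (Fin n) (Fin n) ℝ)
    (hU : U = Matrix.single ⟨n - 1, by omega⟩ ⟨0, by omega⟩ 1
      + Matrix.single ⟨n - 2, by omega⟩ ⟨1, by omega⟩ 1)
    (hξ : ξ = Matrix.single ⟨0, by omega⟩ ⟨n - 1, by omega⟩ 1
      + Matrix.single ⟨1, by omega⟩ ⟨n - 2, by omega⟩ 1) :
    U * ξ - ξ * U = -(Matrix.single ⟨0, by omega⟩ ⟨0, by omega⟩ (1 : ℝ))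
        - Matrix.single ⟨1, by omega⟩ ⟨1, by omega⟩ 1
        + Matrix.single ⟨n - 2, by omega⟩ ⟨n - 2, by omega⟩ 1
        + Matrix.single ⟨n - 1, by omega⟩ ⟨n - 1, by omega⟩ 1 ∧
    (a ≠ 0 → (ξ + a • (U * ξ - ξ * U)).charpoly ≠ ξ.charpoly) := by
  have hpq : (⟨0, by omega⟩ : Fin n) ≠ ⟨1, by omega⟩ := by rw [ne_eq, Fin.mk.injEq]; omega
  have hpr : (⟨0, by omega⟩ : Fin n) ≠ ⟨n - 2, by omega⟩ := by rw [ne_eq, Fin.mk.injEq]; omega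
  have hps : (⟨0, by omega⟩ : Fin n) ≠ ⟨n - 1, by omega⟩ := by rw [ne_eq, Fin.mk.injEq]; omega
  have hqr : (⟨1, by omega⟩ : Fin n) ≠ ⟨n - 2, by omega⟩ := by rw [ne_eq, Fin.mk.injEq]; omega
  have hqs : (⟨1, by omega⟩ : Fin n) ≠ ⟨n - 1, by omega⟩ := by rw [ne_eq, Fin.mk.injEq]; omega
  have hrs : (⟨n - 2, by omega⟩ : Fin n) ≠ ⟨n - 1, by omega⟩ := by rw [ne_eq, Fin.mk.injEq]; omega
  have hcomm : U * ξ - ξ * U = _ := hU ▸ hξ ▸ commutator_single_add_single hpq hrs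
  have hξ2 : ξ * ξ = 0 := hξ ▸ single_add_single_mul_self_eq_zero hps.symm hqs.symm hpr.symm
    hqr.symm 1 1
  refine ⟨hcomm, fun ha hchar ↦ ha ?_⟩
  have hnil := isNilpotent_of_charpoly_eq ⟨2, by rw [sq, hξ2]⟩ hchar
  have htrace := trace_mul_self_eq_zero_of_isNilpotent hnil
  rw [trace_mul_self_add_smul_commutator hξ2, hcomm,
    trace_mul_self_signed_diagonal hpq hpr hps hqr hqs hrs] at htrace
  simpa using htrace
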